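/- In the linear imputation model with m(x; β) = x'β and h(x; β) = x, the mass imputation estimator admits the exact decomposition θ̂_I - θ_N = (N^{-1} Σ_{i∈A} w_i x_i'β* - N^{-1} Σ_{i=1}^N x_i'β*) + N^{-1} Σ_{i∈B} ĉ'x_i e_i* - N^{-1} Σ_{i=1}^N e_i*, where β* is any fixed vector, e_i* = y_i - x_i'β*, β̂ = (Σ_{i∈B} x_i x_i')^{-1} Σ_{i∈B} x_i y_i (with the Gram matrix invertible), θ̂_I = N^{-1} Σ_{i∈A} w_i x_i'β̂, θ_N = N^{-1} Σ_{i=1}^N y_i, and ĉ = (Σ_{i∈B} x_i x_i')^{-1} Σ_{i∈A} w_i x_i. -/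

import Mathlib

/-!
With `M = ∑_B xᵢxᵢ'` and `eᵢ* = yᵢ - xᵢ'β*`, the normal equations give
`β̂ - β* = M⁻¹ ∑_B xᵢeᵢ*`, exactly, because `∑_B xᵢxᵢ'β* = Mβ*`. Since `M` is symmetric, so is
`M⁻¹`, and moving it across the inner product turns `(∑_A wᵢxᵢ)'(β̂ - β*)` into
`ĉ'∑_B xᵢeᵢ* = ∑_B ĉ'xᵢ eᵢ*`. The decomposition is this identity divided by `N`.
-/

open Finset Matrix

section

variable {ι n R : Type*} [CommRing R] {s : Finset ι} {x : ι → n → R} {M : Matrix n n R}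

theorem isSymm_of_eq_gram (hM : ∀ j k, M j k = ∑ i ∈ s, x i j * x i k) : M.IsSymm := by
  ext j k
  simp only [transpose_apply, hM, mul_comm]

variable [Fintype n]

theorem sum_mul_dotProduct (w : ι → R) (β : n → R) :
    ∑ i ∈ s, w i * (x i ⬝ᵥ β) = (fun j => ∑ i ∈ s, w i * x i j) ⬝ᵥ β := by
  simp only [dotProduct, Finset.mul_sum, Finset.sum_mul]
  rw [Finset.sum_comm]
  exact Finset.sum_congr rfl fun _ _ => Finset.sum_congr rfl fun _ _ => (mul_assoc _ _ _).symm

theorem sum_dotProduct_mul (c : n → R) (e : ι → R) :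
    ∑ i ∈ s, (c ⬝ᵥ x i) * e i = c ⬝ᵥ fun j => ∑ i ∈ s, x i j * e i := by
  simp only [dotProduct, Finset.mul_sum, Finset.sum_mul]
  rw [Finset.sum_comm]
  exact Finset.sum_congr rfl fun _ _ => Finset.sum_congr rfl fun _ _ => mul_assoc _ _ _

theorem mulVec_eq_of_eq_gram (hM : ∀ j k, M j k = ∑ i ∈ s, x i j * x i k) (β : n → R) :
    M *ᵥ β = fun j => ∑ i ∈ s, x i j * (x i ⬝ᵥ β) := by
  funext j
  simp only [mulVec, dotProduct, hM, Finset.sum_mul, Finset.mul_sum]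
  rw [Finset.sum_comm]
  exact Finset.sum_congr rfl fun _ _ => Finset.sum_congr rfl fun _ _ => mul_assoc _ _ _

variable [DecidableEq n]

theorem inv_mulVec_sub_eq_inv_mulVec_residual
    (hM : ∀ j k, M j k = ∑ i ∈ s, x i j * x i k) (hdet : IsUnit M.det) (y : ι → R) (β : n → R) :
    M⁻¹ *ᵥ (fun j => ∑ i ∈ s, x i j * y i) - β
      = M⁻¹ *ᵥ fun j => ∑ i ∈ s, x i j * (y i - x i ⬝ᵥ β) := by
  have hresidual : (fun j => ∑ i ∈ s, x i j * (y i - x i ⬝ᵥ β))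
      = (fun j => ∑ i ∈ s, x i j * y i) - M *ᵥ β := by
    rw [mulVec_eq_of_eq_gram hM]
    funext j
    simp only [Pi.sub_apply, mul_sub, Finset.sum_sub_distrib]
  rw [hresidual, mulVec_sub, mulVec_mulVec, nonsing_inv_mul M hdet, one_mulVec]

theorem dotProduct_inv_mulVec_sub_eq_sum_residual
    (hM : ∀ j k, M j k = ∑ i ∈ s, x i j * x i k) (hdet : IsUnit M.det)
    (t : n → R) (y : ι → R) (β : n → R) :
    t ⬝ᵥ (M⁻¹ *ᵥ (fun j => ∑ i ∈ s, x i j * y i) - β)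
      = ∑ i ∈ s, (M⁻¹ *ᵥ t ⬝ᵥ x i) * (y i - x i ⬝ᵥ β) := by
  rw [inv_mulVec_sub_eq_inv_mulVec_residual hM hdet, sum_dotProduct_mul, dotProduct_mulVec,
    ← mulVec_transpose, (isSymm_of_eq_gram hM).inv.eq]

end

theorem mass_imputation_linear_decomposition_general (N p : ℕ)
    (A B : Finset (Fin N)) (w : Fin N → ℝ) (x : Fin N → Fin p → ℝ)
    (y : Fin N → ℝ) (βstar : Fin p → ℝ)
    (M : Matrix (Fin p) (Fin p) ℝ)
    (hM : ∀ j k, M j k = ∑ i ∈ B, x i j * x i k)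
    (hMinv : IsUnit M.det)
    (βhat chat : Fin p → ℝ)
    (hβhat : βhat = M⁻¹.mulVec (fun j => ∑ i ∈ B, x i j * y i))
    (hchat : chat = M⁻¹.mulVec (fun j => ∑ i ∈ A, w i * x i j)) :
    (N : ℝ)⁻¹ * ∑ i ∈ A, w i * ∑ j, x i j * βhat j - (N : ℝ)⁻¹ * ∑ i, y i
      = ((N : ℝ)⁻¹ * ∑ i ∈ A, w i * ∑ j, x i j * βstar j
            - (N : ℝ)⁻¹ * ∑ i, ∑ j, x i j * βstar j)
        + (N : ℝ)⁻¹ * ∑ i ∈ B, (∑ j, chat j * x i j) * (y i - ∑ j, x i j * βstar j)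
        - (N : ℝ)⁻¹ * ∑ i, (y i - ∑ j, x i j * βstar j) := by
  have hfit : ∑ i ∈ A, w i * (x i ⬝ᵥ βhat) - ∑ i ∈ A, w i * (x i ⬝ᵥ βstar)
      = ∑ i ∈ B, (chat ⬝ᵥ x i) * (y i - x i ⬝ᵥ βstar) := by
    rw [sum_mul_dotProduct, sum_mul_dotProduct, ← dotProduct_sub, hβhat, hchat]
    exact dotProduct_inv_mulVec_sub_eq_sum_residual hM hMinv _ y βstar
  simp only [dotProduct] at hfit
  rw [Finset.sum_sub_distrib]
  linear_combination (N : ℝ)⁻¹ * hfit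

/-- Exact linearization of the mass imputation estimator under the linear
imputation model: for any fixed `β*`,
`θ̂_I - θ_N = (N⁻¹∑_A wᵢxᵢ'β* - N⁻¹∑ᵢxᵢ'β*) + N⁻¹∑_B ĉ'xᵢ eᵢ* - N⁻¹∑ᵢ eᵢ*`. -/
theorem mass_imputation_linear_decomposition (N p : ℕ) (hN : 0 < N)
    (A B : Finset (Fin N)) (w : Fin N → ℝ) (x : Fin N → Fin p → ℝ)
    (y : Fin N → ℝ) (βstar : Fin p → ℝ)
    (M : Matrix (Fin p) (Fin p) ℝ)
    (hM : ∀ j k, M j k = ∑ i ∈ B, x i j * x i k)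
    (hMinv : IsUnit M.det)
    (βhat chat : Fin p → ℝ)
    (hβhat : βhat = M⁻¹.mulVec (fun j => ∑ i ∈ B, x i j * y i))
    (hchat : chat = M⁻¹.mulVec (fun j => ∑ i ∈ A, w i * x i j)) :
    (N : ℝ)⁻¹ * ∑ i ∈ A, w i * ∑ j, x i j * βhat j - (N : ℝ)⁻¹ * ∑ i, y i
      = ((N : ℝ)⁻¹ * ∑ i ∈ A, w i * ∑ j, x i j * βstar j
            - (N : ℝ)⁻¹ * ∑ i, ∑ j, x i j * βstar j)
        + (N : ℝ)⁻¹ * ∑ i ∈ B, (∑ j, chat j * x i j) * (y i - ∑ j, x i j * βstar j)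
        - (N : ℝ)⁻¹ * ∑ i, (y i - ∑ j, x i j * βstar j) :=
  mass_imputation_linear_decomposition_general N p A B w x y βstar M hM hMinv βhat chat hβhat hchat
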